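/- arXiv:2003.00785 — 6 statements merged into one kernel-verified Lean document; each statement's English description precedes it below -/
import Mathlib

section
/- Let N ≥ 1 be an even integer and let p be an integer with 1 ≤ p ≤ N. Then ∑_{i = p+1-N/2}^{N/2} cos((2i-1)π/(2N)) = cos²(pπ/(2N)) / sin(π/(2N)). -/
open Real Finset

/-! With θ = π/(2N), the product-to-sum formula turns 2 sin θ · cos((2i-1)θ) into
sin(2iθ) - sin(2(i-1)θ), so the sum telescopes to sin(Nθ) - sin((2p-N)θ) = 1 + cos(2pθ),
which is 2 cos²(pθ). -/

theorem Int.sum_Icc_sub_pred {M : Type*} [AddCommGroup M] (f : ℤ → M) {a b : ℤ}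
    (hab : a - 1 ≤ b) :
    ∑ i ∈ Icc a b, (f i - f (i - 1)) = f b - f (a - 1) := by
  induction b, hab using Int.leInduction with
  | base => simp
  | succ b hb ih =>
    rw [← insert_Icc_right_eq_Icc_add_one (by omega), sum_insert (by simp), ih,
      add_sub_cancel_right]
    abel

theorem two_mul_sin_mul_sum_cos_odd (θ : ℝ) {a b : ℤ} (hab : a - 1 ≤ b) :
    2 * sin θ * ∑ i ∈ Icc a b, cos ((2 * i - 1) * θ) =
      sin (2 * b * θ) - sin (2 * (a - 1) * θ) := by
  have step (i : ℤ) :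
      2 * sin θ * cos ((2 * i - 1) * θ) = sin (2 * i * θ) - sin (2 * (i - 1) * θ) := by
    rw [two_mul_sin_mul_cos, ← neg_sub, sin_neg]
    ring_nf
  rw [mul_sum, sum_congr rfl fun i _ => step i]
  exact_mod_cast Int.sum_Icc_sub_pred (fun i : ℤ => sin (2 * i * θ)) hab

theorem sum_cos_even_case_general (N p : ℤ) (hN : 1 ≤ N) (hNe : Even N) (hpN : p ≤ N) :
    ∑ i ∈ Finset.Icc (p + 1 - N / 2) (N / 2),
        Real.cos ((2 * (i : ℝ) - 1) * Real.pi / (2 * (N : ℝ))) =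
      Real.cos ((p : ℝ) * Real.pi / (2 * (N : ℝ))) ^ 2 / Real.sin (Real.pi / (2 * (N : ℝ))) := by
  obtain ⟨m, rfl⟩ := hNe
  have hm : (m + m) / 2 = m := by omega
  have hm_one : (1 : ℝ) ≤ m := by exact_mod_cast (by omega : 1 ≤ m)
  set θ := π / (2 * ((m + m : ℤ) : ℝ)) with hθ
  have hsin : 0 < sin θ := by
    apply sin_pos_of_pos_of_lt_pi (by positivity)
    rw [hθ, div_lt_iff₀ (by positivity)]
    push_cast
    nlinarith [pi_pos]
  have htop : sin (2 * m * θ) = 1 := by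
    rw [← sin_pi_div_two]; congr 1; rw [hθ]; push_cast; field_simp; ring
  have hbot : sin (2 * ((p + 1 - m : ℤ) - 1) * θ) = - cos (2 * (p * θ)) := by
    rw [← sin_sub_pi_div_two]; congr 1; rw [hθ]; push_cast; field_simp; ring
  have htelescope := two_mul_sin_mul_sum_cos_odd θ (a := p + 1 - m) (b := m) (by omega)
  rw [htop, hbot] at htelescope
  simp only [mul_div_assoc, hm, ← hθ]
  rw [eq_div_iff hsin.ne', cos_sq]
  linarith

theorem sum_cos_even_case (N p : ℤ) (hN : 1 ≤ N) (hNe : Even N) (hp1 : 1 ≤ p) (hpN : p ≤ N) :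
    ∑ i ∈ Finset.Icc (p + 1 - N / 2) (N / 2),
        Real.cos ((2 * (i : ℝ) - 1) * Real.pi / (2 * (N : ℝ))) =
      Real.cos ((p : ℝ) * Real.pi / (2 * (N : ℝ))) ^ 2 / Real.sin (Real.pi / (2 * (N : ℝ))) :=
  sum_cos_even_case_general N p hN hNe hpN
end

section
/- Let N be an odd positive integer and let p be an integer with 1 ≤ p ≤ N. Then ∑_{i = p + (3-N)/2}^{(N+1)/2} cos((i-1)π/N) = cos²(pπ/(2N)) / sin(π/(2N)). -/
/-! Multiplying by `2 sin x` with `x = π / (2N)` makes the sum telescope, since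
`2 sin x cos (θ + 2ix) = sin (θ + (2i+1)x) - sin (θ + (2i-1)x)`. For `N = 2m + 1` the top end
contributes `sin (Nx) = 1` and the bottom end `sin (pπ/N - π/2) = -cos (pπ/N)`, and
`1 + cos (pπ/N) = 2 cos² (pπ/(2N))`. -/

open Real Finset

theorem two_mul_sin_mul_sum_cos_Icc (θ x : ℝ) {a b : ℤ} (hab : a ≤ b + 1) :
    2 * sin x * ∑ i ∈ Icc a b, cos (θ + 2 * i * x) =
      sin (θ + (2 * b + 1) * x) - sin (θ + (2 * a - 1) * x) := by
  induction b, (show a - 1 ≤ b by omega) using Int.leInduction with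
  | base =>
    rw [Icc_eq_empty (by omega), sum_empty]
    push_cast
    ring_nf
  | succ n hn ih =>
    rw [← insert_Icc_right_eq_Icc_add_one (by omega), sum_insert (by simp), mul_add,
      ih (by omega), two_mul_sin_mul_cos]
    have hneg : x - (θ + 2 * ((n + 1 : ℤ) : ℝ) * x) = -(θ + (2 * n + 1) * x) := by
      push_cast
      ring
    rw [hneg, sin_neg]
    push_cast
    ring_nf

theorem sum_cos_odd_case_general (N p : ℤ) (hN : 0 < N) (hNo : Odd N) (hpN : p ≤ N) :
    ∑ i ∈ Finset.Icc (p + (3 - N) / 2) ((N + 1) / 2),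
        Real.cos (((i : ℝ) - 1) * Real.pi / (N : ℝ)) =
      Real.cos ((p : ℝ) * Real.pi / (2 * (N : ℝ))) ^ 2 / Real.sin (Real.pi / (2 * (N : ℝ))) := by
  obtain ⟨m, hm⟩ := hNo
  set x := π / (2 * N) with hx
  have hNm : (N : ℝ) = 2 * m + 1 := by exact_mod_cast hm
  have hsin : sin x ≠ 0 := by
    refine (sin_pos_of_pos_of_lt_pi (by positivity) ?_).ne'
    rw [hx, div_lt_iff₀ (by positivity)]
    nlinarith [pi_pos, (show (1 : ℝ) ≤ N by exact_mod_cast hN)]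
  have hterm (i : ℤ) : cos ((i - 1) * π / N) = cos (-2 * x + 2 * i * x) := by
    rw [hx]; field_simp; ring_nf
  have htop : -2 * x + (2 * ((m + 1 : ℤ) : ℝ) + 1) * x = π / 2 := by
    rw [hx]; push_cast; field_simp; rw [hNm]; ring
  have hbot : -2 * x + (2 * ((p + 1 - m : ℤ) : ℝ) - 1) * x = 2 * (p * π / (2 * N)) - π / 2 := by
    rw [hx]; push_cast; field_simp; rw [hNm]; ring
  have key := two_mul_sin_mul_sum_cos_Icc (-2 * x) x (a := p + 1 - m) (b := m + 1) (by omega)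
  rw [htop, hbot, sin_pi_div_two, sin_sub_pi_div_two] at key
  rw [show p + (3 - N) / 2 = p + 1 - m by omega, show (N + 1) / 2 = m + 1 by omega,
    sum_congr rfl fun i _ => hterm i, cos_sq, eq_div_iff hsin]
  linear_combination key / 2

theorem sum_cos_odd_case (N p : ℤ) (hN : 0 < N) (hNo : Odd N) (hp1 : 1 ≤ p) (hpN : p ≤ N) :
    ∑ i ∈ Finset.Icc (p + (3 - N) / 2) ((N + 1) / 2),
        Real.cos (((i : ℝ) - 1) * Real.pi / (N : ℝ)) =
      Real.cos ((p : ℝ) * Real.pi / (2 * (N : ℝ))) ^ 2 / Real.sin (Real.pi / (2 * (N : ℝ))) :=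
  sum_cos_odd_case_general N p hN hNo hpN
end

section
/- There do not exist real numbers α, β, γ, η with 0 < α < β < γ < π satisfying simultaneously: η ≤ 1/(cos(α/2)+sin(α/2)), η ≤ 1/(cos(β/2)+sin(β/2)), η ≤ 1/(cos(γ/2)+sin(γ/2)), η > 1/(cos((β-α)/2)+sin((β-α)/2)), η > 1/(cos((γ-α)/2)+sin((γ-α)/2)), and η > 1/(cos((γ-β)/2)+sin((γ-β)/2)). -/
open Real

private lemma key_sum (x y : ℝ) (hy : 0 < y) (hyx : y < x) (hx : x < Real.pi)
    (hs : Real.sin x < Real.sin y) : Real.pi < x + y := by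
  have hsub : Real.sin x - Real.sin y =
      2 * Real.sin ((x - y) / 2) * Real.cos ((x + y) / 2) := Real.sin_sub_sin x y
  have h1 : 0 < Real.sin ((x - y) / 2) := by
    apply Real.sin_pos_of_pos_of_lt_pi
    · linarith
    · nlinarith [Real.pi_pos]
  have h2 : Real.cos ((x + y) / 2) < 0 := by nlinarith
  by_contra h
  push_neg at h
  have : 0 ≤ Real.cos ((x + y) / 2) := by
    apply Real.cos_nonneg_of_mem_Icc
    constructor <;> [linarith [Real.pi_pos]; linarith]
  linarith

private lemma fpos (x : ℝ) (h0 : 0 < x) (h1 : x < Real.pi) :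
    0 < Real.cos (x / 2) + Real.sin (x / 2) := by
  have hs : 0 < Real.sin (x / 2) :=
    Real.sin_pos_of_pos_of_lt_pi (by linarith) (by linarith [Real.pi_pos])
  have hc : 0 < Real.cos (x / 2) :=
    Real.cos_pos_of_mem_Ioo ⟨by linarith [Real.pi_pos], by linarith⟩
  linarith

private lemma fsq (x : ℝ) :
    (Real.cos (x / 2) + Real.sin (x / 2)) ^ 2 = 1 + Real.sin x := by
  have h : Real.sin x = 2 * Real.sin (x / 2) * Real.cos (x / 2) := by
    rw [← Real.sin_two_mul]; ring_nf
  nlinarith [Real.sin_sq_add_cos_sq (x / 2)]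

private lemma sin_lt_of (b d η : ℝ) (hb0 : 0 < b) (hb1 : b < Real.pi)
    (hd0 : 0 < d) (hd1 : d < Real.pi)
    (h1 : η ≤ 1 / (Real.cos (b / 2) + Real.sin (b / 2)))
    (h2 : 1 / (Real.cos (d / 2) + Real.sin (d / 2)) < η) :
    Real.sin b < Real.sin d := by
  have hfb := fpos b hb0 hb1
  have hfd := fpos d hd0 hd1
  have h3 : 1 / (Real.cos (d / 2) + Real.sin (d / 2)) <
      1 / (Real.cos (b / 2) + Real.sin (b / 2)) := lt_of_lt_of_le h2 h1
  have h4 : Real.cos (b / 2) + Real.sin (b / 2) <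
      Real.cos (d / 2) + Real.sin (d / 2) := by
    have := (div_lt_div_iff₀ hfd hfb).mp h3
    nlinarith
  nlinarith [fsq b, fsq d]

theorem no_coplanar_realization :
    ¬ ∃ α β γ η : ℝ, 0 < α ∧ α < β ∧ β < γ ∧ γ < Real.pi ∧
      η ≤ 1 / (Real.cos (α / 2) + Real.sin (α / 2)) ∧
      η ≤ 1 / (Real.cos (β / 2) + Real.sin (β / 2)) ∧
      η ≤ 1 / (Real.cos (γ / 2) + Real.sin (γ / 2)) ∧
      1 / (Real.cos ((β - α) / 2) + Real.sin ((β - α) / 2)) < η ∧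
      1 / (Real.cos ((γ - α) / 2) + Real.sin ((γ - α) / 2)) < η ∧
      1 / (Real.cos ((γ - β) / 2) + Real.sin ((γ - β) / 2)) < η := by
  rintro ⟨α, β, γ, η, hα, hαβ, hβγ, hγπ, hA, hB, hC, hD, hE, hF⟩
  -- sin β < sin (β - α)  forces β > π/2
  have s1 : Real.sin β < Real.sin (β - α) :=
    sin_lt_of β (β - α) η (by linarith) (by linarith) (by linarith) (by linarith) hB hD
  have hβhalf : Real.pi < β + (β - α) :=
    key_sum β (β - α) (by linarith) (by linarith) (by linarith) s1
  have hβ : Real.pi / 2 < β := by linarith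
  -- sin β < sin (γ - β)  then forces γ > π
  have s2 : Real.sin β < Real.sin (γ - β) :=
    sin_lt_of β (γ - β) η (by linarith) (by linarith) (by linarith) (by linarith) hB hF
  have hγπ' : Real.pi < β + (γ - β) :=
    key_sum β (γ - β) (by linarith) (by linarith) (by linarith) s2
  linarith
end

section
/- Let 0 < α < β < γ < π. If 1/(cos((β-α)/2)+sin((β-α)/2)) < 1/(cos(α/2)+sin(α/2)), 1/(cos((γ-α)/2)+sin((γ-α)/2)) < 1/(cos(α/2)+sin(α/2)), and 1/(cos((γ-β)/2)+sin((γ-β)/2)) < 1/(cos(β/2)+sin(β/2)), then 2α < β, 2α < γ, and 2β < γ. -/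
open Real

lemma key_angle (a b : ℝ) (ha : 0 < a) (hab : a < b) (hb : b < Real.pi)
    (h : 1 / (Real.cos ((b - a) / 2) + Real.sin ((b - a) / 2)) <
      1 / (Real.cos (a / 2) + Real.sin (a / 2))) : 2 * a < b := by
  by_contra hc
  push_neg at hc
  have hpi := Real.pi_pos
  have hd1 : 0 < Real.cos (a / 2) + Real.sin (a / 2) := by
    have h1 : 0 < Real.cos (a / 2) := Real.cos_pos_of_mem_Ioo ⟨by linarith, by linarith⟩
    have h2 : 0 < Real.sin (a / 2) := Real.sin_pos_of_pos_of_lt_pi (by linarith) (by linarith)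
    linarith
  have hd2 : 0 < Real.cos ((b - a) / 2) + Real.sin ((b - a) / 2) := by
    have h1 : 0 < Real.cos ((b - a) / 2) := Real.cos_pos_of_mem_Ioo ⟨by linarith, by linarith⟩
    have h2 : 0 < Real.sin ((b - a) / 2) :=
      Real.sin_pos_of_pos_of_lt_pi (by linarith) (by linarith)
    linarith
  have hsin := Real.sin_sub_sin (a / 2) ((b - a) / 2)
  have hcos := Real.cos_sub_cos (a / 2) ((b - a) / 2)
  have e1 : (a / 2 - (b - a) / 2) / 2 = (2 * a - b) / 4 := by ring
  have e2 : (a / 2 + (b - a) / 2) / 2 = b / 4 := by ring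
  rw [e1, e2] at hsin hcos
  have hs1 : 0 ≤ Real.sin ((2 * a - b) / 4) :=
    Real.sin_nonneg_of_nonneg_of_le_pi (by linarith) (by linarith)
  have hs2 : Real.sin (b / 4) ≤ Real.cos (b / 4) := by
    have hcp : 0 < Real.cos (b / 4 + Real.pi / 4) :=
      Real.cos_pos_of_mem_Ioo ⟨by linarith, by linarith⟩
    rw [Real.cos_add, Real.cos_pi_div_four, Real.sin_pi_div_four] at hcp
    have h2 : (0:ℝ) < Real.sqrt 2 := by positivity
    nlinarith [Real.sq_sqrt (by norm_num : (2:ℝ) ≥ 0)]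
  have hle : Real.cos ((b - a) / 2) + Real.sin ((b - a) / 2) ≤
      Real.cos (a / 2) + Real.sin (a / 2) := by
    nlinarith [mul_nonneg hs1 (sub_nonneg.2 hs2)]
  have := one_div_le_one_div_of_le hd2 hle
  linarith

theorem angle_constraints (α β γ : ℝ) (h0 : 0 < α) (hab : α < β) (hbg : β < γ) (hg : γ < Real.pi)
    (h1 : 1 / (Real.cos ((β - α) / 2) + Real.sin ((β - α) / 2)) <
      1 / (Real.cos (α / 2) + Real.sin (α / 2)))
    (h2 : 1 / (Real.cos ((γ - α) / 2) + Real.sin ((γ - α) / 2)) <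
      1 / (Real.cos (α / 2) + Real.sin (α / 2)))
    (h3 : 1 / (Real.cos ((γ - β) / 2) + Real.sin ((γ - β) / 2)) <
      1 / (Real.cos (β / 2) + Real.sin (β / 2))) :
    2 * α < β ∧ 2 * α < γ ∧ 2 * β < γ := by
  exact ⟨key_angle α β h0 hab (by linarith) h1,
    key_angle α γ h0 (by linarith) hg h2,
    key_angle β γ (by linarith) hbg hg h3⟩
end

section
/- Let N ≥ 2 and let a₁,…,a_N ∈ ℝ³ and b₁,…,b_N ∈ ℝ with b₁ ≤ b₂ ≤ ⋯ ≤ b_N and 0 ≤ b_k for all k. Define T_p = (a_p - a_{p+1})/4 for 1 ≤ p < N and S = (a₁ + a_N)/4. If ‖a₁ + a_N‖ + ∑_{p=1}^{N-1} ‖a_p - a_{p+1}‖ ≤ 2(1 - max_k |b_k|), then the real numbers α_p = ‖T_p‖, γ_p = ‖T_p‖ + (b_{p+1}-b_p)/2, β = (1+b₁)/2 - ∑_{p=1}^{N-1}‖T_p‖, δ = (1-b_N)/2 - ∑_{p=1}^{N-1}‖T_p‖ satisfy: ‖T_p‖ ≤ α_p, ‖T_p‖ ≤ γ_p, ‖S‖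 ≤ β, ‖S‖ ≤ δ, and for every k with 1 ≤ k ≤ N, ∑_{p=1}^{k-1} γ_p + ∑_{p=k}^{N-1} α_p + β = (1+b_k)/2 and ∑_{p=1}^{k-1} α_p + ∑_{p=k}^{N-1} γ_p + δ = (1-b_k)/2. -/
open Real Finset

theorem joint_povm_constraints (N : ℕ) (hN : 2 ≤ N)
    (a : ℕ → EuclideanSpace ℝ (Fin 3)) (b : ℕ → ℝ)
    (hmono : ∀ k : ℕ, 1 ≤ k → k < N → b k ≤ b (k + 1))
    (hnonneg : ∀ k : ℕ, 1 ≤ k → k ≤ N → 0 ≤ b k)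
    (hbound : ‖a 1 + a N‖ + ∑ p ∈ Finset.Icc 1 (N - 1), ‖a p - a (p + 1)‖ ≤
      2 * (1 - (Finset.Icc 1 N).sup' (Finset.nonempty_Icc.mpr (by omega))
        (fun k => |b k|))) :
    (∀ p : ℕ, 1 ≤ p → p < N →
        ‖(1 / 4 : ℝ) • (a p - a (p + 1))‖ ≤ ‖(1 / 4 : ℝ) • (a p - a (p + 1))‖) ∧
    (∀ p : ℕ, 1 ≤ p → p < N →
        ‖(1 / 4 : ℝ) • (a p - a (p + 1))‖ ≤
          ‖(1 / 4 : ℝ) • (a p - a (p + 1))‖ + (b (p + 1) - b p) / 2) ∧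
    ‖(1 / 4 : ℝ) • (a 1 + a N)‖ ≤
      (1 + b 1) / 2 - ∑ p ∈ Finset.Icc 1 (N - 1), ‖(1 / 4 : ℝ) • (a p - a (p + 1))‖ ∧
    ‖(1 / 4 : ℝ) • (a 1 + a N)‖ ≤
      (1 - b N) / 2 - ∑ p ∈ Finset.Icc 1 (N - 1), ‖(1 / 4 : ℝ) • (a p - a (p + 1))‖ ∧
    (∀ k : ℕ, 1 ≤ k → k ≤ N →
      (∑ p ∈ Finset.Icc 1 (k - 1),
          (‖(1 / 4 : ℝ) • (a p - a (p + 1))‖ + (b (p + 1) - b p) / 2)) +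
        (∑ p ∈ Finset.Icc k (N - 1), ‖(1 / 4 : ℝ) • (a p - a (p + 1))‖) +
        ((1 + b 1) / 2 - ∑ p ∈ Finset.Icc 1 (N - 1), ‖(1 / 4 : ℝ) • (a p - a (p + 1))‖) =
        (1 + b k) / 2) ∧
    (∀ k : ℕ, 1 ≤ k → k ≤ N →
      (∑ p ∈ Finset.Icc 1 (k - 1), ‖(1 / 4 : ℝ) • (a p - a (p + 1))‖) +
        (∑ p ∈ Finset.Icc k (N - 1),
          (‖(1 / 4 : ℝ) • (a p - a (p + 1))‖ + (b (p + 1) - b p) / 2)) +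
        ((1 - b N) / 2 - ∑ p ∈ Finset.Icc 1 (N - 1), ‖(1 / 4 : ℝ) • (a p - a (p + 1))‖) =
        (1 - b k) / 2) := by

  have h1N : (1:ℕ) ∈ Finset.Icc 1 N := Finset.mem_Icc.mpr ⟨le_refl 1, by omega⟩
  have hNN : N ∈ Finset.Icc 1 N := Finset.mem_Icc.mpr ⟨by omega, le_refl N⟩
  set M := (Finset.Icc 1 N).sup' (Finset.nonempty_Icc.mpr (by omega)) (fun k => |b k|) with hM
  have hMb1 : |b 1| ≤ M := by rw [hM]; exact Finset.le_sup' (fun k => |b k|) h1N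
  have hMbN : |b N| ≤ M := by rw [hM]; exact Finset.le_sup' (fun k => |b k|) hNN
  have hb1 : 0 ≤ b 1 := hnonneg 1 le_rfl (by omega)
  have hbN : 0 ≤ b N := hnonneg N (by omega) le_rfl
  have hns : ∀ v : EuclideanSpace ℝ (Fin 3), ‖(1 / 4 : ℝ) • v‖ = ‖v‖ / 4 := by
    intro v
    rw [norm_smul, Real.norm_eq_abs, abs_of_nonneg (by norm_num : (0:ℝ) ≤ 1/4)]
    ring
  have hsum4 : ∀ s : Finset ℕ, ∑ p ∈ s, ‖(1 / 4 : ℝ) • (a p - a (p + 1))‖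
      = (∑ p ∈ s, ‖a p - a (p + 1)‖) / 4 := by
    intro s; rw [Finset.sum_div]; exact Finset.sum_congr rfl (fun p _ => hns _)
  have hb1M : b 1 ≤ M := (le_abs_self _).trans hMb1
  have hbNM : b N ≤ M := (le_abs_self _).trans hMbN
  have hsplit : ∀ k : ℕ, 1 ≤ k → k ≤ N → ∀ g : ℕ → ℝ,
      ∑ p ∈ Finset.Icc 1 (k-1), g p + ∑ p ∈ Finset.Icc k (N-1), g p
        = ∑ p ∈ Finset.Icc 1 (N-1), g p := by
    intro k hk hkN g
    rw [show Finset.Icc 1 (k-1) = Finset.Ico 1 k by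
          ext x; simp only [Finset.mem_Icc, Finset.mem_Ico]; omega,
        show Finset.Icc k (N-1) = Finset.Ico k N by
          ext x; simp only [Finset.mem_Icc, Finset.mem_Ico]; omega,
        show Finset.Icc 1 (N-1) = Finset.Ico 1 N by
          ext x; simp only [Finset.mem_Icc, Finset.mem_Ico]; omega]
    exact Finset.sum_Ico_consecutive _ hk hkN
  have htele : ∀ m n : ℕ, 1 ≤ m → m ≤ n → ∑ p ∈ Finset.Icc m (n-1), (b (p+1) - b p)
      = b n - b m := by
    intro m n hm hmn
    rw [show Finset.Icc m (n-1) = Finset.Ico m n by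
          ext x; simp only [Finset.mem_Icc, Finset.mem_Ico]; omega,
        Finset.sum_Ico_eq_sub _ hmn, Finset.sum_range_sub, Finset.sum_range_sub]
    ring
  refine ⟨fun p _ _ => le_rfl, ?_, ?_, ?_, ?_, ?_⟩
  · intro p hp hpN
    have := hmono p hp hpN
    linarith
  · rw [hns, hsum4]
    linarith [hbound, hb1M, hb1]
  · rw [hns, hsum4]
    linarith [hbound, hbNM]
  · intro k hk hkN
    have hs := hsplit k hk hkN (fun p => ‖(1 / 4 : ℝ) • (a p - a (p + 1))‖)
    have ht := htele 1 k le_rfl hk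
    rw [Finset.sum_add_distrib, show
        ∑ p ∈ Finset.Icc 1 (k-1), (b (p+1) - b p) / 2
          = (∑ p ∈ Finset.Icc 1 (k-1), (b (p+1) - b p)) / 2 from
        (Finset.sum_div _ _ _).symm, ht]
    linarith
  · intro k hk hkN
    have hs := hsplit k hk hkN (fun p => ‖(1 / 4 : ℝ) • (a p - a (p + 1))‖)
    have ht := htele k N hk hkN
    rw [Finset.sum_add_distrib, show
        ∑ p ∈ Finset.Icc k (N-1), (b (p+1) - b p) / 2
          = (∑ p ∈ Finset.Icc k (N-1), (b (p+1) - b p)) / 2 from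
        (Finset.sum_div _ _ _).symm, ht]
    linarith
end

section
/- For all unit vectors n₁, n₂ in ℝ³ with n₁·n₂ = cos φ and real η with 0 ≤ η ≤ 1: the inequality ‖η n₁ + η n₂‖ + ‖η n₁ - η n₂‖ ≤ 2 holds if and only if η ≤ 1/(|sin(φ/2)| + |cos(φ/2)|). -/
open Real RealInnerProductSpace

theorem busch_halfangle (n₁ n₂ : EuclideanSpace ℝ (Fin 3)) (h1 : ‖n₁‖ = 1) (h2 : ‖n₂‖ = 1)
    (φ : ℝ) (hφ : ⟪n₁, n₂⟫ = Real.cos φ) (η : ℝ) (hη0 : 0 ≤ η) (hη1 : η ≤ 1) :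
    ‖η • n₁ + η • n₂‖ + ‖η • n₁ - η • n₂‖ ≤ 2 ↔
      η ≤ 1 / (|Real.sin (φ / 2)| + |Real.cos (φ / 2)|) := by
  set s := |Real.sin (φ / 2)| with hs
  set c := |Real.cos (φ / 2)| with hc
  have hs2 : s ^ 2 = (1 - Real.cos φ) / 2 := by
    rw [hs, sq_abs, Real.sin_sq, Real.cos_sq]
    rw [show 2 * (φ / 2) = φ by ring]; ring
  have hc2 : c ^ 2 = (1 + Real.cos φ) / 2 := by
    rw [hc, sq_abs, Real.cos_sq]
    rw [show 2 * (φ / 2) = φ by ring]; ring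
  have hsn : 0 ≤ s := abs_nonneg _
  have hcn : 0 ≤ c := abs_nonneg _
  have hd : 0 < s + c := by nlinarith
  have hadd : ‖n₁ + n₂‖ = 2 * c := by
    have hsq : ‖n₁ + n₂‖ ^ 2 = (2 * c) ^ 2 := by
      rw [norm_add_sq_real, h1, h2, hφ]; nlinarith
    calc ‖n₁ + n₂‖ = Real.sqrt (‖n₁ + n₂‖ ^ 2) := (Real.sqrt_sq (norm_nonneg _)).symm
      _ = Real.sqrt ((2 * c) ^ 2) := by rw [hsq]
      _ = 2 * c := Real.sqrt_sq (by positivity)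
  have hsub : ‖n₁ - n₂‖ = 2 * s := by
    have hsq : ‖n₁ - n₂‖ ^ 2 = (2 * s) ^ 2 := by
      rw [norm_sub_sq_real, h1, h2, hφ]; nlinarith
    calc ‖n₁ - n₂‖ = Real.sqrt (‖n₁ - n₂‖ ^ 2) := (Real.sqrt_sq (norm_nonneg _)).symm
      _ = Real.sqrt ((2 * s) ^ 2) := by rw [hsq]
      _ = 2 * s := Real.sqrt_sq (by positivity)
  have h1' : ‖η • n₁ + η • n₂‖ = η * (2 * c) := by
    rw [← smul_add, norm_smul, Real.norm_eq_abs, abs_of_nonneg hη0, hadd]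
  have h2' : ‖η • n₁ - η • n₂‖ = η * (2 * s) := by
    rw [← smul_sub, norm_smul, Real.norm_eq_abs, abs_of_nonneg hη0, hsub]
  rw [h1', h2', le_div_iff₀ hd]
  constructor <;> intro h <;> nlinarith
end
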